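/- Assume f satisfies (f1) and (f2) with β > 0, let 0 < a < b < ∞, and let u₁ and u₂ be two positive solutions of (R) with 0 < u₁'(a) < u₂'(a). If there exists s₀ ∈ (0, min{M₁, M₂}) such that V₁(s) ≤ V₂(s) for all s ∈ [0, s₀], then r₁(s) > r₂(s) and u₁'(r₁(s)) < u₂'(r₂(s)) (equivalently, r₁'(s) > r₂'(s)) for all s ∈ (0, s₀]. -/

import Mathlib

open Set Filter MeasureTheory

/-- `F(s) = ∫₀ˢ f(t) dt`. -/
noncomputable def Fint (f : ℝ → ℝ) (s : ℝ) : ℝ := ∫ t in (0:ℝ)..s, f t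

/-- Condition (f1): `f` is continuous on `[0,∞)`, continuously differentiable on `(0,∞)`,
and `f' ∈ L¹(0,1)`. -/
def CondF1 (f : ℝ → ℝ) : Prop :=
  ContinuousOn f (Ici 0) ∧ (∀ s ∈ Ioi (0:ℝ), DifferentiableAt ℝ f s) ∧
  ContinuousOn (deriv f) (Ioi 0) ∧ IntervalIntegrable (deriv f) volume 0 1

/-- Condition (f2) in the case `β > B > 0`. -/
def CondF2B (f : ℝ → ℝ) (β B : ℝ) : Prop :=
  f 0 = 0 ∧ 0 < B ∧ B < β ∧ (∀ s, B < s → 0 < f s) ∧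
  (∀ s ∈ Icc (0:ℝ) B, f s ≤ 0) ∧ (∃ ε > (0:ℝ), ∀ s ∈ Ioo (0:ℝ) ε, f s < 0) ∧
  Fint f β = 0

/-- Condition (f2): either `β = B = 0` and `f > 0` on `(0,∞)`, or `β > B > 0` with the
sign conditions and `F(β) = 0`. -/
def CondF2 (f : ℝ → ℝ) (β B : ℝ) : Prop :=
  (β = 0 ∧ B = 0 ∧ f 0 = 0 ∧ ∀ s, 0 < s → 0 < f s) ∨ CondF2B f β B

/-- Condition (f3): the derivative of `s ↦ F(s)/f(s)` is `≥ (n-2)/(2n)` for every `s > β`. -/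
def CondF3 (n : ℕ) (f : ℝ → ℝ) (β : ℝ) : Prop :=
  ∀ s, β < s → ∃ d, ((n : ℝ) - 2) / (2 * (n : ℝ)) ≤ d ∧
    HasDerivAt (fun t => Fint f t / f t) d s

/-- Condition (f4): superlinearity `f(s) ≤ f'(s)(s - B)` for `s > B`, with
`f(s) ≢ f'(s)(s - B)` on `[B, β]`. -/
def CondF4 (f : ℝ → ℝ) (β B : ℝ) : Prop :=
  (∀ s, B < s → f s ≤ deriv f s * (s - B)) ∧
  ¬ (∀ s ∈ Icc B β, f s = deriv f s * (s - B))

/-- A positive solution of problem (R) on the annulus `a < |x| < b`: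
`u` is continuous on `[a,b]`, differentiable up to the boundary with derivative `u'`
(one-sided at the endpoints), `u'` is continuous on `[a,b]`, `u` is twice continuously
differentiable on `(a,b)` where it satisfies `u'' + ((n-1)/r) u' + f(u) = 0`,
`u(a) = u(b) = 0` and `u > 0` on `(a,b)`. -/
def IsPosSolAnn (n : ℕ) (a b : ℝ) (f u u' : ℝ → ℝ) : Prop :=
  ContinuousOn u (Icc a b) ∧
  (∀ r ∈ Icc a b, HasDerivWithinAt u (u' r) (Icc a b) r) ∧
  ContinuousOn u' (Icc a b) ∧
  (∀ r ∈ Ioo a b, HasDerivAt u (u' r) r) ∧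
  (∀ r ∈ Ioo a b, HasDerivAt u' (-(((n : ℝ) - 1) / r * u' r + f (u r))) r) ∧
  u a = 0 ∧ u b = 0 ∧ (∀ r ∈ Ioo a b, 0 < u r)

/-- A positive solution of the exterior problem (R) with `b = ∞`:
`u` is continuous on `[a,∞)`, differentiable on `[a,∞)` with derivative `u'`
(one-sided at `a`), twice continuously differentiable on `(a,∞)` where it satisfies
`u'' + ((n-1)/r) u' + f(u) = 0`, `u(a) = 0`, `u > 0` on `(a,∞)` and `u(r) → 0` as `r → ∞`. -/
def IsPosSolExt (n : ℕ) (a : ℝ) (f u u' : ℝ → ℝ) : Prop :=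
  ContinuousOn u (Ici a) ∧
  (∀ r ∈ Ici a, HasDerivWithinAt u (u' r) (Ici a) r) ∧
  (∀ r ∈ Ioi a, HasDerivAt u (u' r) r) ∧
  (∀ r ∈ Ioi a, HasDerivAt u' (-(((n : ℝ) - 1) / r * u' r + f (u r))) r) ∧
  u a = 0 ∧ (∀ r ∈ Ioi a, 0 < u r) ∧
  Tendsto u atTop (nhds 0)

/-- The Erbe–Tang functional
`P(s) = -2n (F(s)/f(s)) ρ(s)^{n-1} u'(ρ(s)) - ρ(s)^n (u'(ρ(s)))² - 2 ρ(s)^n F(s)`,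
where `ρ` is an inverse branch of the solution `u` with derivative `u'`. -/
noncomputable def Pfun (n : ℕ) (f : ℝ → ℝ) (ρ u' : ℝ → ℝ) (s : ℝ) : ℝ :=
  -2 * (n : ℝ) * (Fint f s / f s) * (ρ s) ^ (n - 1) * u' (ρ s)
    - (ρ s) ^ n * (u' (ρ s)) ^ 2 - 2 * (ρ s) ^ n * Fint f s


/-! Write `wᵢ(s) = uᵢ'(rᵢ(s))`, so that `rᵢ' = 1 / wᵢ`, `r₁(0) = r₂(0) = a` and `w₁(0) < w₂(0)`.
As long as `w₁ < w₂`, the difference `r₁ - r₂` increases and so is positive. At a first point `q`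
where `w₂(q) ≤ w₁(q)` we would get `r₁(q) > r₂(q)` and `w₂(q)² + 2F(q) ≤ w₁(q)² + 2F(q)`, and this
energy is positive below the maximum of `u₁`; hence `V₁(q) > V₂(q)`, contradicting `V₁ ≤ V₂`. -/

theorem MonotoneOn.continuousOn_of_surjOn_Icc {f : ℝ → ℝ} {a b c d : ℝ}
    (hf : MonotoneOn f (Icc a b)) (hmaps : MapsTo f (Icc a b) (Icc c d))
    (hsurj : SurjOn f (Icc a b) (Icc c d)) : ContinuousOn f (Icc a b) := by
  rw [continuousOn_iff_continuous_domRestrict]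
  have hg : Continuous hmaps.restrict :=
    Monotone.continuous_of_denseRange (fun x y hxy => hf x.2 y.2 hxy)
      (hmaps.restrict_surjective_iff.2 hsurj).denseRange
  exact continuous_subtype_val.comp hg

theorem forall_Icc_lt_of_forall_Ico_lt {g h : ℝ → ℝ} {a b : ℝ}
    (hg : ContinuousOn g (Icc a b)) (hh : ContinuousOn h (Icc a b)) (ha : g a < h a)
    (step : ∀ q ∈ Ioc a b, (∀ x ∈ Ico a q, g x < h x) → g q < h q) :
    ∀ x ∈ Icc a b, g x < h x := by
  by_contra! hbad
  set S := {x ∈ Icc a b | h x ≤ g x}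
  have hbdd : BddBelow S := ⟨a, fun x hx => hx.1.1⟩
  have hq : sInf S ∈ S := (isClosed_Icc.isClosed_le hh hg).csInf_mem hbad hbdd
  have hqa : a < sInf S := hq.1.1.lt_of_ne fun he => (he ▸ hq.2).not_gt ha
  refine (step (sInf S) ⟨hqa, hq.1.2⟩ fun x hx => ?_).not_ge hq.2
  by_contra! hle
  exact (csInf_le hbdd ⟨⟨hx.1, hx.2.le.trans hq.1.2⟩, hle⟩).not_gt hx.2

theorem strictMonoOn_sub_of_hasDerivAt_inv {r₁ r₂ w₁ w₂ : ℝ → ℝ} {a b : ℝ}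
    (hr₁ : ContinuousOn r₁ (Icc a b)) (hr₂ : ContinuousOn r₂ (Icc a b))
    (hr₁' : ∀ s ∈ Ioo a b, HasDerivAt r₁ (w₁ s)⁻¹ s)
    (hr₂' : ∀ s ∈ Ioo a b, HasDerivAt r₂ (w₂ s)⁻¹ s)
    (hw₁ : ∀ s ∈ Ioo a b, 0 < w₁ s) (hw : ∀ s ∈ Ioo a b, w₁ s < w₂ s) :
    StrictMonoOn (fun s => r₁ s - r₂ s) (Icc a b) := by
  refine strictMonoOn_of_deriv_pos (convex_Icc a b) (hr₁.sub hr₂) fun s hs => ?_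
  rw [interior_Icc] at hs
  have hd : HasDerivAt (fun s => r₁ s - r₂ s) ((w₁ s)⁻¹ - (w₂ s)⁻¹) s :=
    (hr₁' s hs).sub (hr₂' s hs)
  rw [hd.deriv, sub_pos]
  exact inv_strictAnti₀ (hw₁ s hs) (hw s hs)

theorem lt_of_pow_mul_energy_le {r₁ r₂ w₁ w₂ F : ℝ → ℝ} {a b : ℝ} {k : ℕ} (hk : k ≠ 0)
    (hr₁ : ContinuousOn r₁ (Icc a b)) (hr₂ : ContinuousOn r₂ (Icc a b))
    (hw₁ : ContinuousOn w₁ (Icc a b)) (hw₂ : ContinuousOn w₂ (Icc a b))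
    (hr₁' : ∀ s ∈ Ioo a b, HasDerivAt r₁ (w₁ s)⁻¹ s)
    (hr₂' : ∀ s ∈ Ioo a b, HasDerivAt r₂ (w₂ s)⁻¹ s)
    (hw₁pos : ∀ s ∈ Icc a b, 0 < w₁ s) (hw₂pos : ∀ s ∈ Icc a b, 0 < w₂ s)
    (hr₂nonneg : ∀ s ∈ Icc a b, 0 ≤ r₂ s) (hra : r₁ a = r₂ a) (hwa : w₁ a < w₂ a)
    (hE : ∀ s ∈ Icc a b, 0 < w₁ s ^ 2 + F s)
    (hV : ∀ s ∈ Icc a b, r₁ s ^ k * (w₁ s ^ 2 + F s) ≤ r₂ s ^ k * (w₂ s ^ 2 + F s)) :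
    ∀ s ∈ Ioc a b, r₂ s < r₁ s ∧ w₁ s < w₂ s := by
  have hr : ∀ q ∈ Ioc a b, (∀ s ∈ Ico a q, w₁ s < w₂ s) → r₂ q < r₁ q := by
    intro q hq hw
    have hsub : Ioo a q ⊆ Ioo a b := Ioo_subset_Ioo_right hq.2
    have hmono := strictMonoOn_sub_of_hasDerivAt_inv
      (hr₁.mono (Icc_subset_Icc_right hq.2)) (hr₂.mono (Icc_subset_Icc_right hq.2))
      (fun s hs => hr₁' s (hsub hs)) (fun s hs => hr₂' s (hsub hs))
      (fun s hs => hw₁pos s (Ioo_subset_Icc_self (hsub hs)))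
      (fun s hs => hw s (Ioo_subset_Ico_self hs))
      (left_mem_Icc.2 hq.1.le) (right_mem_Icc.2 hq.1.le) hq.1
    simpa only [hra, sub_self, sub_pos] using hmono
  have hw : ∀ s ∈ Icc a b, w₁ s < w₂ s := by
    refine forall_Icc_lt_of_forall_Ico_lt hw₁ hw₂ hwa fun q hq hw => ?_
    have hqI : q ∈ Icc a b := Ioc_subset_Icc_self hq
    by_contra! hle
    have hpow : r₂ q ^ k < r₁ q ^ k := pow_lt_pow_left₀ (hr q hq hw) (hr₂nonneg q hqI) hk
    have hsq : w₂ q ^ 2 ≤ w₁ q ^ 2 := pow_le_pow_left₀ (hw₂pos q hqI).le hle 2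
    have := calc
      r₁ q ^ k * (w₁ q ^ 2 + F q) ≤ r₂ q ^ k * (w₂ q ^ 2 + F q) := hV q hqI
      _ ≤ r₂ q ^ k * (w₁ q ^ 2 + F q) :=
        mul_le_mul_of_nonneg_left (by linarith) (pow_nonneg (hr₂nonneg q hqI) k)
      _ < r₁ q ^ k * (w₁ q ^ 2 + F q) := mul_lt_mul_of_pos_right hpow (hE q hqI)
    exact this.false
  exact fun s hs => ⟨hr s hs fun x hx => hw x ⟨hx.1, hx.2.le.trans hs.2⟩, hw s ⟨hs.1.le, hs.2⟩⟩

section Primitive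

variable {f : ℝ → ℝ}

theorem continuousOn_Fint (hf : ContinuousOn f (Ici 0)) : ContinuousOn (Fint f) (Ici 0) := by
  intro s hs
  have hs1 : (0 : ℝ) ≤ s + 1 := by linarith [mem_Ici.1 hs]
  have hprim := intervalIntegral.continuousOn_primitive_interval
    (μ := volume) (a := 0) (b := s + 1) (f := f)
    (by rw [uIcc_of_le hs1]; exact (hf.mono Icc_subset_Ici_self).integrableOn_Icc)
  rw [uIcc_of_le hs1] at hprim
  refine (hprim s ⟨hs, (lt_add_one s).le⟩).mono_of_mem_nhdsWithin ?_
  exact mem_nhdsWithin.2 ⟨Iio (s + 1), isOpen_Iio, lt_add_one s, fun x hx => ⟨hx.2, hx.1.le⟩⟩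

theorem hasDerivAt_Fint (hf : ContinuousOn f (Ici 0)) {s : ℝ} (hs : 0 < s) :
    HasDerivAt (Fint f) (f s) s :=
  intervalIntegral.integral_hasDerivAt_right
    ((hf.mono (by rw [uIcc_of_le hs.le]; exact Icc_subset_Ici_self)).intervalIntegrable)
    ((hf.mono Ioi_subset_Ici_self).stronglyMeasurableAtFilter isOpen_Ioi s hs)
    (hf.continuousAt (Ici_mem_nhds hs))

end Primitive

theorem MonotoneOn.continuousOn_of_rightInvOn {u r : ℝ → ℝ} {a c M : ℝ}
    (hu : MonotoneOn u (Icc a c)) (hua : u a = 0) (huc : u c = M)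
    (hmaps : MapsTo r (Icc 0 M) (Icc a c)) (hright : RightInvOn r u (Icc 0 M))
    (hleft : LeftInvOn r u (Icc a c)) : ContinuousOn r (Icc 0 M) :=
  (Function.monotoneOn_of_rightInvOn_of_mapsTo hu hright hmaps).continuousOn_of_surjOn_Icc hmaps
    fun x hx => ⟨u x, ⟨hua ▸ hu ⟨le_rfl, hx.1.trans hx.2⟩ hx hx.1,
      huc ▸ hu hx ⟨hx.1.trans hx.2, le_rfl⟩ hx.2⟩, hleft hx⟩

namespace IsPosSolAnn

variable {n : ℕ} {a b : ℝ} {f u u' : ℝ → ℝ}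

theorem nonneg (h : IsPosSolAnn n a b f u u') : MapsTo u (Icc a b) (Ici 0) := by
  obtain ⟨-, -, -, -, -, hua, hub, hpos⟩ := h
  rintro x ⟨hax, hxb⟩
  rcases hax.eq_or_lt with rfl | hax
  · exact hua.ge
  rcases hxb.eq_or_lt with rfl | hxb
  · exact hub.ge
  exact (hpos x ⟨hax, hxb⟩).le

theorem continuousOn_energy (hf : ContinuousOn f (Ici 0)) (h : IsPosSolAnn n a b f u u') :
    ContinuousOn (fun x => u' x ^ 2 + 2 * Fint f (u x)) (Icc a b) :=
  (h.2.2.1.pow 2).add (continuousOn_const.mul ((continuousOn_Fint hf).comp h.1 h.nonneg))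

theorem hasDerivAt_energy (hf : ContinuousOn f (Ici 0)) (h : IsPosSolAnn n a b f u u')
    {r : ℝ} (hr : r ∈ Ioo a b) :
    HasDerivAt (fun x => u' x ^ 2 + 2 * Fint f (u x)) (-(2 * ((n : ℝ) - 1) / r * u' r ^ 2)) r := by
  obtain ⟨-, -, -, hu, hu', -, -, hpos⟩ := h
  refine (((hu' r hr).pow 2).add
    (((hasDerivAt_Fint hf (hpos r hr)).comp r (hu r hr)).const_mul 2)).congr_deriv ?_
  ring

/-- The energy decreases along the solution, strictly where `u' ≠ 0`, down to `u'(b)² ≥ 0`. -/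
theorem energy_pos (hn : 1 < n) (hf : ContinuousOn f (Ici 0)) (ha : 0 < a)
    (h : IsPosSolAnn n a b f u u') {c : ℝ} (hc : c ∈ Ioo a b)
    (hdown : ∀ x ∈ Ioo c b, u' x < 0) : ∀ x ∈ Icc a c, 0 < u' x ^ 2 + 2 * Fint f (u x) := by
  have hn' : (0 : ℝ) < n - 1 := by
    have : (1 : ℝ) < n := by exact_mod_cast hn
    linarith
  have hcoef : ∀ x ∈ Ioo a b, 0 < 2 * ((n : ℝ) - 1) / x := fun x hx =>
    div_pos (by linarith) (ha.trans hx.1)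
  have hanti : AntitoneOn (fun x => u' x ^ 2 + 2 * Fint f (u x)) (Icc a b) := by
    refine antitoneOn_of_deriv_nonpos (convex_Icc a b) (h.continuousOn_energy hf) ?_ ?_ <;>
      rw [interior_Icc]
    · exact fun x hx => (h.hasDerivAt_energy hf hx).differentiableAt.differentiableWithinAt
    · intro x hx
      rw [(h.hasDerivAt_energy hf hx).deriv, neg_nonpos]
      exact mul_nonneg (hcoef x hx).le (sq_nonneg _)
  have hstrict : StrictAntiOn (fun x => u' x ^ 2 + 2 * Fint f (u x)) (Icc c b) := by
    refine strictAntiOn_of_deriv_neg (convex_Icc c b)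
      ((h.continuousOn_energy hf).mono (Icc_subset_Icc_left hc.1.le)) fun x hx => ?_
    rw [interior_Icc] at hx
    have hxab : x ∈ Ioo a b := ⟨hc.1.trans hx.1, hx.2⟩
    rw [(h.hasDerivAt_energy hf hxab).deriv, neg_lt_zero]
    exact mul_pos (hcoef x hxab) (sq_pos_of_neg (hdown x hx))
  intro x hx
  have hub : u b = 0 := h.2.2.2.2.2.2.1
  calc (0 : ℝ) ≤ u' b ^ 2 + 2 * Fint f (u b) := by
        rw [hub, Fint, intervalIntegral.integral_same, mul_zero, add_zero]
        exact sq_nonneg _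
    _ < u' c ^ 2 + 2 * Fint f (u c) := hstrict ⟨le_rfl, hc.2.le⟩ ⟨hc.2.le, le_rfl⟩ hc.2
    _ ≤ u' x ^ 2 + 2 * Fint f (u x) :=
        hanti ⟨hx.1, hx.2.trans hc.2.le⟩ ⟨hc.1.le, hc.2.le⟩ hx.2

theorem inverse_branch (hn : 1 < n) (hf : ContinuousOn f (Ici 0)) (ha : 0 < a)
    (h : IsPosSolAnn n a b f u u') {c M : ℝ} (hc : c ∈ Ioo a b)
    (hup : ∀ x ∈ Ico a c, 0 < u' x) (hdown : ∀ x ∈ Ioo c b, u' x < 0) (hM : M = u c)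
    {r : ℝ → ℝ} (hmaps : MapsTo r (Icc 0 M) (Icc a c)) (hright : RightInvOn r u (Icc 0 M))
    (hleft : LeftInvOn r u (Icc a c)) {T : ℝ} (hT : T < M) :
    r 0 = a ∧ ContinuousOn r (Icc 0 T) ∧ ContinuousOn (fun s => u' (r s)) (Icc 0 T) ∧
      (∀ s ∈ Icc 0 T, 0 < u' (r s)) ∧ (∀ s ∈ Ioo 0 T, HasDerivAt r (u' (r s))⁻¹ s) ∧
      ∀ s ∈ Icc 0 T, 0 < u' (r s) ^ 2 + 2 * Fint f s := by
  have hE := h.energy_pos hn hf ha hc hdown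
  obtain ⟨hu, -, hu'c, hud, -, hua, -, -⟩ := h
  have hmono : StrictMonoOn u (Icc a c) := by
    refine strictMonoOn_of_deriv_pos (convex_Icc a c) (hu.mono (Icc_subset_Icc_right hc.2.le))
      fun x hx => ?_
    rw [interior_Icc] at hx
    rw [(hud x ⟨hx.1, hx.2.trans hc.2⟩).deriv]
    exact hup x ⟨hx.1.le, hx.2⟩
  have hTM : Icc 0 T ⊆ Icc 0 M := Icc_subset_Icc_right hT.le
  have hrc : ContinuousOn r (Icc 0 M) :=
    hmono.monotoneOn.continuousOn_of_rightInvOn hua hM.symm hmaps hright hleft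
  have hr_lt : ∀ s ∈ Ico 0 M, r s < c := fun s hs =>
    (hmaps ⟨hs.1, hs.2.le⟩).2.lt_of_ne fun he => hs.2.ne (by rw [← hright ⟨hs.1, hs.2.le⟩, he, hM])
  have hw : ∀ s ∈ Icc 0 T, 0 < u' (r s) := fun s hs =>
    hup _ ⟨(hmaps (hTM hs)).1, hr_lt s ⟨hs.1, hs.2.trans_lt hT⟩⟩
  refine ⟨hua ▸ hleft ⟨le_rfl, hc.1.le⟩, hrc.mono hTM,
    hu'c.comp (hrc.mono hTM) fun s hs => Icc_subset_Icc_right hc.2.le (hmaps (hTM hs)), hw,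
    fun s hs => ?_, fun s hs => ?_⟩
  · have hsM : s ∈ Icc 0 M := ⟨hs.1.le, hs.2.le.trans hT.le⟩
    have har : a < r s := (hmaps hsM).1.lt_of_ne fun he => hs.1.ne (by rw [← hright hsM, ← he, hua])
    exact HasDerivAt.of_local_left_inverse (hrc.continuousAt (Icc_mem_nhds hs.1 (hs.2.trans hT)))
      (hud _ ⟨har, (hmaps hsM).2.trans_lt hc.2⟩) (hw s (Ioo_subset_Icc_self hs)).ne'
      (eventually_of_mem (Ioo_mem_nhds hs.1 (hs.2.trans hT)) fun y hy =>
        hright ⟨hy.1.le, hy.2.le⟩)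
  · simpa only [hright (hTM hs)] using hE (r s) (hmaps (hTM hs))

end IsPosSolAnn

theorem V_comparison_general
    (n : ℕ) (hn : 2 ≤ n) (f : ℝ → ℝ)
    (hf1 : CondF1 f)
    (a b : ℝ) (ha : 0 < a)
    (u₁ u₁' u₂ u₂' : ℝ → ℝ)
    (h₁ : IsPosSolAnn n a b f u₁ u₁') (h₂ : IsPosSolAnn n a b f u₂ u₂')
    (hslope₁₂ : u₁' a < u₂' a)
    (c₁ c₂ : ℝ) (hc₁ : c₁ ∈ Ioo a b) (hc₂ : c₂ ∈ Ioo a b)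
    (hc₁up : ∀ r ∈ Ico a c₁, 0 < u₁' r) (hc₁down : ∀ r ∈ Ioo c₁ b, u₁' r < 0)
    (hc₂up : ∀ r ∈ Ico a c₂, 0 < u₂' r) (hc₂down : ∀ r ∈ Ioo c₂ b, u₂' r < 0)
    (M₁ M₂ : ℝ) (hM₁ : M₁ = u₁ c₁) (hM₂ : M₂ = u₂ c₂)
    (r₁ r₂ : ℝ → ℝ)
    (hr₁mem : ∀ s ∈ Icc (0:ℝ) M₁, r₁ s ∈ Icc a c₁ ∧ u₁ (r₁ s) = s)
    (hr₁inv : ∀ r ∈ Icc a c₁, r₁ (u₁ r) = r)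
    (hr₂mem : ∀ s ∈ Icc (0:ℝ) M₂, r₂ s ∈ Icc a c₂ ∧ u₂ (r₂ s) = s)
    (hr₂inv : ∀ r ∈ Icc a c₂, r₂ (u₂ r) = r)
    (s₀ : ℝ) (hs₀ : s₀ ∈ Ioo (0:ℝ) (min M₁ M₂))
    (hV : ∀ s ∈ Icc (0:ℝ) s₀,
      (r₁ s) ^ (2 * (n - 1)) * ((u₁' (r₁ s)) ^ 2 + 2 * Fint f s) ≤
      (r₂ s) ^ (2 * (n - 1)) * ((u₂' (r₂ s)) ^ 2 + 2 * Fint f s)) :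
    ∀ s ∈ Ioc (0:ℝ) s₀, r₂ s < r₁ s ∧ u₁' (r₁ s) < u₂' (r₂ s) := by
  have hs₀M₁ : s₀ < M₁ := hs₀.2.trans_le (min_le_left _ _)
  have hs₀M₂ : s₀ < M₂ := hs₀.2.trans_le (min_le_right _ _)
  obtain ⟨hr₁a, hr₁, hw₁, hw₁pos, hr₁', hE₁⟩ := h₁.inverse_branch hn hf1.1 ha hc₁ hc₁up hc₁down
    hM₁ (fun s hs => (hr₁mem s hs).1) (fun s hs => (hr₁mem s hs).2) hr₁inv hs₀M₁
  obtain ⟨hr₂a, hr₂, hw₂, hw₂pos, hr₂', -⟩ := h₂.inverse_branch hn hf1.1 ha hc₂ hc₂up hc₂down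
    hM₂ (fun s hs => (hr₂mem s hs).1) (fun s hs => (hr₂mem s hs).2) hr₂inv hs₀M₂
  have hr₂nonneg : ∀ s ∈ Icc 0 s₀, 0 ≤ r₂ s := fun s hs =>
    ha.le.trans (hr₂mem s ⟨hs.1, hs.2.trans hs₀M₂.le⟩).1.1
  exact lt_of_pow_mul_energy_le (by omega) hr₁ hr₂ hw₁ hw₂ hr₁' hr₂' hw₁pos hw₂pos hr₂nonneg
    (hr₁a.trans hr₂a.symm) (by rwa [hr₁a, hr₂a]) hE₁ hV

/-- Lemma 3.2 (V-comparison): if `V₁ ≤ V₂` on `[0, s₀]` for some `s₀ ∈ (0, min{M₁,M₂})`,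
then `r₁(s) > r₂(s)` and `u₁'(r₁(s)) < u₂'(r₂(s))` for all `s ∈ (0, s₀]`. -/
theorem V_comparison
    (n : ℕ) (hn : 2 ≤ n) (f : ℝ → ℝ) (β B : ℝ)
    (hf1 : CondF1 f) (hf2 : CondF2B f β B)
    (a b : ℝ) (ha : 0 < a) (hab : a < b)
    (u₁ u₁' u₂ u₂' : ℝ → ℝ)
    (h₁ : IsPosSolAnn n a b f u₁ u₁') (h₂ : IsPosSolAnn n a b f u₂ u₂')
    (hslope₁ : 0 < u₁' a) (hslope₁₂ : u₁' a < u₂' a)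
    (c₁ c₂ : ℝ) (hc₁ : c₁ ∈ Ioo a b) (hc₂ : c₂ ∈ Ioo a b)
    (hc₁up : ∀ r ∈ Ico a c₁, 0 < u₁' r) (hc₁down : ∀ r ∈ Ioo c₁ b, u₁' r < 0)
    (hc₂up : ∀ r ∈ Ico a c₂, 0 < u₂' r) (hc₂down : ∀ r ∈ Ioo c₂ b, u₂' r < 0)
    (M₁ M₂ : ℝ) (hM₁ : M₁ = u₁ c₁) (hM₂ : M₂ = u₂ c₂)
    (r₁ r₂ : ℝ → ℝ)
    (hr₁mem : ∀ s ∈ Icc (0:ℝ) M₁, r₁ s ∈ Icc a c₁ ∧ u₁ (r₁ s) = s)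
    (hr₁inv : ∀ r ∈ Icc a c₁, r₁ (u₁ r) = r)
    (hr₂mem : ∀ s ∈ Icc (0:ℝ) M₂, r₂ s ∈ Icc a c₂ ∧ u₂ (r₂ s) = s)
    (hr₂inv : ∀ r ∈ Icc a c₂, r₂ (u₂ r) = r)
    (s₀ : ℝ) (hs₀ : s₀ ∈ Ioo (0:ℝ) (min M₁ M₂))
    (hV : ∀ s ∈ Icc (0:ℝ) s₀,
      (r₁ s) ^ (2 * (n - 1)) * ((u₁' (r₁ s)) ^ 2 + 2 * Fint f s) ≤
      (r₂ s) ^ (2 * (n - 1)) * ((u₂' (r₂ s)) ^ 2 + 2 * Fint f s)) :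
    ∀ s ∈ Ioc (0:ℝ) s₀, r₂ s < r₁ s ∧ u₁' (r₁ s) < u₂' (r₂ s) :=
  V_comparison_general n hn f hf1 a b ha u₁ u₁' u₂ u₂' h₁ h₂ hslope₁₂ c₁ c₂ hc₁ hc₂ hc₁up hc₁down
    hc₂up hc₂down M₁ M₂ hM₁ hM₂ r₁ r₂ hr₁mem hr₁inv hr₂mem hr₂inv s₀ hs₀ hV
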